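/- Let n ≥ 0 and let 0 = a_0 < a_1 < ⋯ < a_n be integers. The number of t = 0 touching-path configurations with endpoints (a_0,…,a_n) equals the ratio of Vandermonde determinants Δ(a_0, a_1+1, a_2+2, …, a_n+n) / Δ(0, 1, 2, …, n) = ∏_{0 ≤ i < j ≤ n} ((a_j + j) − (a_i + i)) / (j − i). -/

import Mathlib

/-!
Conservation at the vertices of a row determines its horizontal multiplicities from the
vertical ones, so a configuration is the chain of its vertical multiplicity vectors: at height
`r` a multiset of `r` columns, ending in `{a_0, …, a_n}`. Comparing partial sums, a row with
horizontal multiplicities in `{0, 1}` joins the sorted tuples `y` below and `x` above exactly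
when they interlace, `x_0 ≤ y_0 ≤ x_1 ≤ ⋯ ≤ y_{r-1} ≤ x_r`; so configurations are
Gelfand–Tsetlin patterns with top row `a`, and their number `N` satisfies
`N(x) = ∑_{y interlacing x} N(y)`. The ratio of Vandermonde products equals
`det (C(x_i + i, j))`, which obeys the same recursion: summing over the box of interlacing `y`
is a determinant of hockey-stick sums `C(x_{i+1} + i + 1, j + 1) - C(x_i + i, j + 1)`, and this
is what subtracting consecutive rows of the matrix for `x` leaves after expanding along the
first column.
-/

open Finset

/-- A t = 0 touching-path configuration with endpoints `(a_0,…,a_n)` on the grid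
`{0,…,a_n} × {−n,…,0}`: edge multiplicities satisfying conservation at every vertex,
horizontal multiplicities at most 1, multiplicity 1 on each incoming west boundary edge,
0 on the east and south boundary edges, and 1 on the outgoing north boundary edge exactly
at the columns `a_0, …, a_n`. -/
def TouchingConfig (n : ℕ) (a : Fin (n + 1) → ℕ)
    (c : (Fin (n + 1) → Fin (a (Fin.last n) + 2) → ℕ) ×
         (Fin (n + 2) → Fin (a (Fin.last n) + 1) → ℕ)) : Prop :=
  (∀ (r : Fin (n + 1)) (j : Fin (a (Fin.last n) + 1)),
      c.1 r j.castSucc + c.2 r.castSucc j = c.1 r j.succ + c.2 r.succ j) ∧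
  (∀ (r : Fin (n + 1)) (j : Fin (a (Fin.last n) + 2)), c.1 r j ≤ 1) ∧
  (∀ r : Fin (n + 1), c.1 r 0 = 1) ∧
  (∀ r : Fin (n + 1), c.1 r (Fin.last (a (Fin.last n) + 1)) = 0) ∧
  (∀ j : Fin (a (Fin.last n) + 1), c.2 0 j = 0) ∧
  (∀ j : Fin (a (Fin.last n) + 1),
      c.2 (Fin.last (n + 1)) j = if ∃ i, a i = (j : ℕ) then 1 else 0)

open Matrix

section Chains

variable {α : Type*}

abbrev RelChain (R : α → α → Prop) (s t : α) (k : ℕ) : Type _ :=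
  {v : Fin (k + 1) → α //
    v 0 = s ∧ v (Fin.last k) = t ∧ ∀ i : Fin k, R (v i.castSucc) (v i.succ)}

namespace RelChain

variable {R : α → α → Prop} {s t : α}

instance : Subsingleton (RelChain R s t 0) :=
  ⟨fun v w => Subtype.ext <| funext fun i => by rw [Fin.fin_one_eq_zero i, v.2.1, w.2.1]⟩

instance : Inhabited (RelChain R s s 0) := ⟨⟨fun _ => s, rfl, rfl, Fin.elim0⟩⟩

def snocEquiv (k : ℕ) : RelChain R s t (k + 1) ≃ Σ u : {u // R u t}, RelChain R s u k where
  toFun v := ⟨⟨v.1 (Fin.last k).castSucc, by simpa [v.2.2.1] using v.2.2.2 (Fin.last k)⟩,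
    ⟨Fin.init v.1, v.2.1, rfl, fun i => v.2.2.2 i.castSucc⟩⟩
  invFun p := ⟨Fin.snoc p.2.1 t, by simpa using p.2.2.1, by simp, fun i => by
    refine Fin.lastCases ?_ (fun i => ?_) i
    · simpa [p.2.2.2.1] using p.1.2
    · rw [Fin.succ_castSucc, Fin.snoc_castSucc, Fin.snoc_castSucc]
      exact p.2.2.2.2 i⟩
  left_inv v := Subtype.ext <| by simpa [v.2.2.1] using Fin.snoc_init_self v.1
  right_inv := by
    rintro ⟨⟨u, hu⟩, w, hw⟩
    exact Sigma.subtype_ext (Subtype.ext (by simpa using hw.2.1)) (by simp)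

theorem finite (hR : ∀ t, {u | R u t}.Finite) (k : ℕ) (t : α) : Finite (RelChain R s t k) := by
  induction k generalizing t with
  | zero => infer_instance
  | succ k ih =>
    have : Finite {u // R u t} := hR t
    exact Finite.of_equiv _ (snocEquiv k).symm

theorem card_succ (hR : ∀ t, {u | R u t}.Finite) (k : ℕ) (P : Finset α)
    (hP : ∀ u, u ∈ P ↔ R u t) :
    Nat.card (RelChain R s t (k + 1)) = ∑ u ∈ P, Nat.card (RelChain R s u k) := by
  have := finite (s := s) hR k
  have : Fintype {u // R u t} := Fintype.subtype P hP
  rw [Nat.card_congr (snocEquiv k), Nat.card_sigma, sum_subtype P hP]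

end RelChain

end Chains

section Interlacing

variable {k : ℕ}

def countBelow (b : Fin k → ℕ) (j : ℕ) : ℕ := #{i | b i < j}

theorem countBelow_le_of_le {x y : Fin k → ℕ} (h : ∀ i, x i ≤ y i) (j : ℕ) :
    countBelow y j ≤ countBelow x j :=
  card_le_card fun i => by simp only [mem_filter, mem_univ, true_and]; have := h i; omega

theorem countBelow_of_forall_lt {b : Fin k → ℕ} {j : ℕ} (h : ∀ i, b i < j) :
    countBelow b j = k := by
  simp [countBelow, h]

theorem le_of_countBelow_le {x y : Fin k → ℕ} (hx : Monotone x) (hy : Monotone y)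
    (h : ∀ j, countBelow y j ≤ countBelow x j) (i : Fin k) : x i ≤ y i := by
  by_contra! hlt
  have hcy : (i : ℕ) + 1 ≤ countBelow y (y i + 1) :=
    calc (i : ℕ) + 1 = #(Iic i) := (Fin.card_Iic i).symm
      _ ≤ _ := card_le_card fun l hl => by
        simp only [mem_Iic, mem_filter, mem_univ, true_and] at hl ⊢
        exact Nat.lt_succ_of_le (hy hl)
  have hcx : countBelow x (y i + 1) ≤ i :=
    calc countBelow x (y i + 1) ≤ #(Iio i) := card_le_card fun l hl => by
          simp only [mem_Iio, mem_filter, mem_univ, true_and] at hl ⊢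
          by_contra! hil
          have := hx hil
          omega
      _ = i := Fin.card_Iio i
  have := h (y i + 1)
  omega

theorem countBelow_eq_castSucc_add (a : Fin (k + 1) → ℕ) (j : ℕ) :
    countBelow a j =
      countBelow (fun i => a i.castSucc) j + if a (Fin.last k) < j then 1 else 0 := by
  simp only [countBelow, card_filter, Fin.sum_univ_castSucc]

theorem countBelow_eq_add_succ (a : Fin (k + 1) → ℕ) (j : ℕ) :
    countBelow a j = (if a 0 < j then 1 else 0) + countBelow (fun i => a i.succ) j := by
  simp only [countBelow, card_filter, Fin.sum_univ_succ]

def interlacing (a : Fin (k + 1) → ℕ) : Finset (Fin k → ℕ) :=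
  Fintype.piFinset fun i => Icc (a i.castSucc) (a i.succ)

variable {a : Fin (k + 1) → ℕ} {b : Fin k → ℕ}

theorem mem_interlacing :
    b ∈ interlacing a ↔ ∀ i, a i.castSucc ≤ b i ∧ b i ≤ a i.succ := by
  simp [interlacing]

theorem monotone_of_mem_interlacing (ha : Monotone a) (hb : b ∈ interlacing a) :
    Monotone b := by
  rw [mem_interlacing] at hb
  intro i i' hii'
  rcases hii'.eq_or_lt with rfl | hlt
  · rfl
  · exact (hb i).2.trans ((ha (Fin.succ_le_castSucc_iff.2 hlt)).trans (hb i').1)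

theorem le_of_mem_interlacing {W : ℕ} (haW : ∀ i, a i ≤ W) (hb : b ∈ interlacing a)
    (i : Fin k) : b i ≤ W :=
  (mem_interlacing.1 hb i).2.trans (haW _)

theorem mem_interlacing_iff_countBelow (ha : Monotone a) (hb : Monotone b) :
    b ∈ interlacing a ↔
      ∀ j, countBelow b j ≤ countBelow a j ∧ countBelow a j ≤ countBelow b j + 1 := by
  have hlo : Monotone fun i : Fin k => a i.castSucc :=
    fun i i' h => ha (Fin.castSucc_le_castSucc_iff.2 h)
  have hhi : Monotone fun i : Fin k => a i.succ := fun i i' h => ha (Fin.succ_le_succ_iff.2 h)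
  rw [mem_interlacing]
  refine ⟨fun hab j => ⟨?_, ?_⟩, fun h i => ⟨?_, ?_⟩⟩
  · have := countBelow_le_of_le (fun i => (hab i).1) j
    have := countBelow_eq_castSucc_add a j
    omega
  · have := countBelow_le_of_le (fun i => (hab i).2) j
    have := countBelow_eq_add_succ a j
    split_ifs at this <;> omega
  · refine le_of_countBelow_le hlo hb (fun j => ?_) i
    have := countBelow_eq_castSucc_add a j
    split_ifs at this with hj
    · rw [countBelow_of_forall_lt fun i => (ha (Fin.le_last _)).trans_lt hj]
      exact (card_le_univ _).trans_eq (Fintype.card_fin k)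
    · have := (h j).1
      omega
  · refine le_of_countBelow_le hb hhi (fun j => ?_) i
    have := countBelow_eq_add_succ a j
    split_ifs at this with hj
    · have := (h j).2
      omega
    · have : countBelow (fun i => a i.succ) j = 0 := by
        simp only [countBelow, card_eq_zero, filter_eq_empty_iff, mem_univ, true_implies]
        intro l
        have := ha (Fin.zero_le l.succ)
        omega
      omega

end Interlacing

section Rows

variable {W k : ℕ}

def prefixSum (u : Fin (W + 1) → ℕ) (j : ℕ) : ℕ :=
  ∑ i ∈ univ.filter (fun i : Fin (W + 1) => (i : ℕ) < j), u i

@[simp]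
theorem prefixSum_zero (u : Fin (W + 1) → ℕ) : prefixSum u 0 = 0 := by
  simp [prefixSum]

theorem prefixSum_succ (u : Fin (W + 1) → ℕ) (j : Fin (W + 1)) :
    prefixSum u (j + 1) = prefixSum u j + u j := by
  have : univ.filter (fun i : Fin (W + 1) => (i : ℕ) < j + 1) =
      insert j (univ.filter fun i : Fin (W + 1) => (i : ℕ) < j) := by
    ext i
    simp only [mem_filter, mem_univ, true_and, mem_insert, Fin.ext_iff]
    omega
  rw [prefixSum, this, sum_insert (by simp), add_comm]
  rfl

theorem prefixSum_of_le (u : Fin (W + 1) → ℕ) {j : ℕ} (hj : W + 1 ≤ j) :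
    prefixSum u j = ∑ i, u i := by
  rw [prefixSum, filter_true_of_mem fun i _ => by omega]

def multiplicities (W : ℕ) (b : Fin k → ℕ) : Fin (W + 1) → ℕ := fun j => #{i | b i = j}

theorem prefixSum_multiplicities {b : Fin k → ℕ} (hb : ∀ i, b i ≤ W) (j : ℕ) :
    prefixSum (multiplicities W b) j = countBelow b j := by
  rw [countBelow, prefixSum, card_eq_sum_card_fiberwise
    (f := fun i => (⟨b i, Nat.lt_succ_of_le (hb i)⟩ : Fin (W + 1)))
    (t := univ.filter fun l : Fin (W + 1) => (l : ℕ) < j) (fun i hi => by simpa using hi)]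
  refine sum_congr rfl fun l hl => congrArg card ?_
  ext i
  simp only [mem_filter, mem_univ, true_and, Fin.ext_iff] at hl ⊢
  exact ⟨fun h => ⟨h ▸ hl, h⟩, And.right⟩

theorem sum_multiplicities {b : Fin k → ℕ} (hb : ∀ i, b i ≤ W) :
    ∑ j, multiplicities W b j = k := by
  rw [← prefixSum_of_le _ le_rfl, prefixSum_multiplicities hb,
    countBelow_of_forall_lt fun i => Nat.lt_succ_of_le (hb i)]

theorem eq_of_multiplicities_eq {b b' : Fin k → ℕ} (hb : Monotone b) (hb' : Monotone b')
    (hbW : ∀ i, b i ≤ W) (hbW' : ∀ i, b' i ≤ W)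
    (h : multiplicities W b = multiplicities W b') : b = b' := by
  have hcount (j : ℕ) : countBelow b j = countBelow b' j := by
    rw [← prefixSum_multiplicities hbW, ← prefixSum_multiplicities hbW', h]
  exact funext fun i => le_antisymm (le_of_countBelow_le hb hb' (fun j => (hcount j).ge) i)
    (le_of_countBelow_le hb' hb (fun j => (hcount j).le) i)

theorem exists_monotone_multiplicities_eq (u : Fin (W + 1) → ℕ) (hu : ∑ j, u j = k) :
    ∃ b : Fin k → ℕ, Monotone b ∧ (∀ i, b i ≤ W) ∧ multiplicities W b = u := by
  let e : (Σ j : Fin (W + 1), Fin (u j)) ≃ Fin k := Fintype.equivFinOfCardEq (by simp [hu])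
  let c : Fin k → ℕ := fun i => (e.symm i).1
  refine ⟨c ∘ Tuple.sort c, Tuple.monotone_sort c, fun i => Nat.lt_succ_iff.1 (e.symm _).1.2,
    ?_⟩
  funext j
  calc #{i | c (Tuple.sort c i) = j} = #{i | c i = j} := card_equiv (Tuple.sort c) (by simp)
    _ = #{x : Σ j : Fin (W + 1), Fin (u j) | (x.1 : ℕ) = j} := card_equiv e.symm (by simp [c])
    _ = u j := by
      rw [card_filter, Fintype.sum_sigma]
      simp [Fin.val_inj]

theorem multiplicities_of_injective {b : Fin k → ℕ} (hb : Function.Injective b)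
    (j : Fin (W + 1)) : multiplicities W b j = if ∃ i, b i = j then 1 else 0 := by
  split_ifs with h
  · obtain ⟨i, hi⟩ := h
    exact card_eq_one.2 ⟨i, by ext i'; simpa [← hi] using hb.eq_iff⟩
  · exact card_eq_zero.2 (filter_eq_empty_iff.2 fun i _ hi => h ⟨i, hi⟩)

/-- One row of a configuration: `u` and `w` are the vertical multiplicities entering it from
below and leaving it above, `h` the horizontal ones. -/
def IsRowConfig (u w : Fin (W + 1) → ℕ) (h : Fin (W + 2) → ℕ) : Prop :=
  (∀ j : Fin (W + 1), h j.castSucc + u j = h j.succ + w j) ∧ (∀ j, h j ≤ 1) ∧ h 0 = 1 ∧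
    h (Fin.last (W + 1)) = 0

section IsRowConfig

variable {u w : Fin (W + 1) → ℕ} {h : Fin (W + 2) → ℕ}

theorem IsRowConfig.add_prefixSum (hc : IsRowConfig u w h) (j : Fin (W + 2)) :
    h j + prefixSum w j = 1 + prefixSum u j := by
  induction j using Fin.induction with
  | zero => simpa using hc.2.2.1
  | succ j ih =>
    have := hc.1 j
    rw [Fin.val_castSucc] at ih
    rw [Fin.val_succ, prefixSum_succ, prefixSum_succ]
    omega

theorem IsRowConfig.unique {h' : Fin (W + 2) → ℕ} (hc : IsRowConfig u w h)
    (hc' : IsRowConfig u w h') : h = h' :=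
  funext fun j => by have := hc.add_prefixSum j; have := hc'.add_prefixSum j; omega

theorem exists_isRowConfig_iff :
    (∃ h, IsRowConfig u w h) ↔
      (∀ j, prefixSum u j ≤ prefixSum w j ∧ prefixSum w j ≤ prefixSum u j + 1) ∧
        ∑ j, w j = ∑ j, u j + 1 := by
  constructor
  · rintro ⟨h, hc⟩
    have hsum := hc.add_prefixSum (Fin.last _)
    rw [hc.2.2.2, Fin.val_last, prefixSum_of_le _ le_rfl, prefixSum_of_le _ le_rfl] at hsum
    refine ⟨fun j => ?_, by omega⟩
    by_cases hj : j ≤ W + 1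
    · have : h ⟨j, _⟩ + prefixSum w j = 1 + prefixSum u j := hc.add_prefixSum ⟨j, by omega⟩
      have := hc.2.1 ⟨j, by omega⟩
      omega
    · rw [prefixSum_of_le u (by omega), prefixSum_of_le w (by omega)]
      omega
  · rintro ⟨hle, hsum⟩
    refine ⟨fun j => 1 + prefixSum u j - prefixSum w j, fun j => ?_,
      fun j => by have := hle j; dsimp only; omega, by simp, ?_⟩
    · have := hle j
      have := hle (j + 1)
      simp only [Fin.val_castSucc, Fin.val_succ, prefixSum_succ] at this ⊢
      omega
    · simp only [Fin.val_last, prefixSum_of_le _ le_rfl]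
      omega

theorem finite_setOf_isRowConfig (w : Fin (W + 1) → ℕ) :
    {u | ∃ h, IsRowConfig u w h}.Finite :=
  (Set.finite_Iic fun _ => ∑ j, w j).subset fun u hu j => by
    have := (exists_isRowConfig_iff.1 hu).2
    have := single_le_sum (fun j _ => Nat.zero_le (u j)) (mem_univ j)
    show u j ≤ ∑ j, w j
    omega

end IsRowConfig

variable {a : Fin (k + 1) → ℕ}

theorem exists_isRowConfig_multiplicities_iff {b : Fin k → ℕ} (ha : Monotone a)
    (hb : Monotone b) (haW : ∀ i, a i ≤ W) (hbW : ∀ i, b i ≤ W) :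
    (∃ h, IsRowConfig (multiplicities W b) (multiplicities W a) h) ↔ b ∈ interlacing a := by
  simp [exists_isRowConfig_iff, mem_interlacing_iff_countBelow ha hb, sum_multiplicities haW,
    sum_multiplicities hbW, prefixSum_multiplicities haW, prefixSum_multiplicities hbW]

theorem exists_isRowConfig_iff_mem_image_multiplicities (ha : Monotone a) (haW : ∀ i, a i ≤ W)
    (u : Fin (W + 1) → ℕ) :
    (∃ h, IsRowConfig u (multiplicities W a) h) ↔
      u ∈ (interlacing a).image (multiplicities W) := by
  constructor
  · intro hu
    have hsum := (exists_isRowConfig_iff.1 hu).2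
    rw [sum_multiplicities haW] at hsum
    obtain ⟨b, hb, hbW, rfl⟩ := exists_monotone_multiplicities_eq u (by omega : ∑ j, u j = k)
    exact mem_image_of_mem _ ((exists_isRowConfig_multiplicities_iff ha hb haW hbW).1 hu)
  · rw [mem_image]
    rintro ⟨b, hb, rfl⟩
    exact (exists_isRowConfig_multiplicities_iff ha (monotone_of_mem_interlacing ha hb) haW
      (le_of_mem_interlacing haW hb)).2 hb

end Rows

section Determinant

variable {k : ℕ}

def vandermondeRatio (a : Fin k → ℕ) : ℚ :=
  (∏ p ∈ Finset.univ.filter (fun p : Fin k × Fin k => p.1 < p.2),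
      (((a p.2 : ℚ) + (p.2 : ℕ)) - ((a p.1 : ℚ) + (p.1 : ℕ)))) /
    (∏ p ∈ Finset.univ.filter (fun p : Fin k × Fin k => p.1 < p.2),
      (((p.2 : ℕ) : ℚ) - ((p.1 : ℕ) : ℚ)))

def chooseMatrix (x : Fin k → ℕ) : Matrix (Fin k) (Fin k) ℚ :=
  of fun i j => ((x i).choose j : ℚ)

theorem prod_filter_lt_sub_eq_det_vandermonde (x : Fin k → ℚ) :
    ∏ p ∈ univ.filter (fun p : Fin k × Fin k => p.1 < p.2), (x p.2 - x p.1) =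
      (vandermonde x).det := by
  rw [det_vandermonde, prod_finset_product _ univ (fun i => Ioi i) (by simp)]

theorem det_vandermonde_eq_prod_factorial_mul_det_chooseMatrix (x : Fin k → ℕ) :
    (vandermonde fun i => (x i : ℚ)).det =
      (∏ j : Fin k, ((j : ℕ).factorial : ℚ)) * (chooseMatrix x).det := by
  rw [det_eval_matrixOfPolynomials_eq_det_vandermonde _ (fun j => descPochhammer ℚ j)
    (fun j => descPochhammer_natDegree ℚ j) (fun j => monic_descPochhammer ℚ j),
    ← det_mul_row]
  congr 1
  ext i j
  simp [chooseMatrix, descPochhammer_eval_eq_descFactorial,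
    Nat.descFactorial_eq_factorial_mul_choose]

theorem det_chooseMatrix_val : (chooseMatrix fun i : Fin k => (i : ℕ)).det = 1 := by
  rw [det_of_isLowerTriangular _ fun i j hij => ?_]
  · simp [chooseMatrix]
  · simp [chooseMatrix, Nat.choose_eq_zero_of_lt (show (i : ℕ) < j from hij)]

theorem vandermondeRatio_eq_det (a : Fin k → ℕ) :
    vandermondeRatio a = (chooseMatrix fun i => a i + i).det := by
  have hnum := det_vandermonde_eq_prod_factorial_mul_det_chooseMatrix fun i => a i + i
  have hden := det_vandermonde_eq_prod_factorial_mul_det_chooseMatrix fun i : Fin k => (i : ℕ)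
  rw [det_chooseMatrix_val, mul_one] at hden
  push_cast at hnum
  rw [vandermondeRatio, prod_filter_lt_sub_eq_det_vandermonde (fun i => (a i : ℚ) + (i : ℕ)),
    prod_filter_lt_sub_eq_det_vandermonde (fun i => ((i : ℕ) : ℚ)), hnum, hden,
    mul_div_cancel_left₀ _ (prod_ne_zero_iff.2 fun j _ => by positivity)]

theorem sum_Icc_choose_add (i j : ℕ) {s u : ℕ} (h : s ≤ u) :
    ∑ t ∈ Icc s u, ((t + i).choose j : ℚ) =
      ((u + 1 + i).choose (j + 1) : ℚ) - ((s + i).choose (j + 1) : ℚ) := by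
  rw [← sum_Icc_sub h (fun t => ((t + i).choose (j + 1) : ℚ))]
  refine sum_congr rfl fun t _ => ?_
  rw [add_right_comm, Nat.choose_succ_succ']
  push_cast
  ring

theorem det_chooseMatrix_succ (x : Fin (k + 1) → ℕ) :
    (chooseMatrix x).det = (of fun i j : Fin k =>
      ((x i.succ).choose (j + 1) : ℚ) - ((x i.castSucc).choose (j + 1) : ℚ)).det := by
  set B : Matrix (Fin (k + 1)) (Fin (k + 1)) ℚ := of fun i j => Fin.cases (chooseMatrix x 0 j)
    (fun i => chooseMatrix x i.succ j - chooseMatrix x i.castSucc j) i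
  rw [det_eq_of_forall_row_eq_smul_add_pred (A := chooseMatrix x) (B := B) (fun _ => 1)
    (fun j => rfl) (fun i j => by simp [B]), det_succ_column_zero, Fin.sum_univ_succ]
  simp only [B, chooseMatrix, of_apply, Fin.cases_zero, Fin.cases_succ, Fin.val_succ,
    Fin.succAbove_zero, Nat.choose_zero_right, Nat.cast_one, sub_self, Fin.val_zero, pow_zero,
    one_mul, mul_one, mul_zero, zero_mul, sum_const_zero, add_zero]
  rfl

theorem sum_vandermondeRatio_interlacing {a : Fin (k + 1) → ℕ} (ha : Monotone a) :
    ∑ b ∈ interlacing a, vandermondeRatio b = vandermondeRatio a := by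
  simp_rw [vandermondeRatio_eq_det]
  calc ∑ b ∈ interlacing a, (chooseMatrix fun i => b i + i).det
      = (of fun i j : Fin k =>
          ∑ t ∈ Icc (a i.castSucc) (a i.succ), ((t + (i : ℕ)).choose j : ℚ)).det := by
        have := (detRowAlternating (R := ℚ) (n := Fin k)).map_sum_finset
          (fun (i : Fin k) (t : ℕ) (j : Fin k) => ((t + i).choose j : ℚ))
          (fun i => Icc (a i.castSucc) (a i.succ))
        simp only [Finset.sum_fn] at this
        exact this.symm
    _ = (of fun i j : Fin k => ((a i.succ + 1 + i).choose (j + 1) : ℚ) -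
          ((a i.castSucc + i).choose (j + 1) : ℚ)).det := by
        congr 1
        ext i j
        exact sum_Icc_choose_add _ _ (ha (Fin.castSucc_le_succ i))
    _ = _ := by
        rw [det_chooseMatrix_succ]
        simp [add_assoc, add_comm 1]

end Determinant

theorem touchingConfig_iff {n : ℕ} {a : Fin (n + 1) → ℕ} (ha : Function.Injective a)
    (c : (Fin (n + 1) → Fin (a (Fin.last n) + 2) → ℕ) ×
      (Fin (n + 2) → Fin (a (Fin.last n) + 1) → ℕ)) :
    TouchingConfig n a c ↔ (∀ r, IsRowConfig (c.2 r.castSucc) (c.2 r.succ) (c.1 r)) ∧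
      c.2 0 = 0 ∧ c.2 (Fin.last (n + 1)) = multiplicities (a (Fin.last n)) a := by
  simp only [TouchingConfig, IsRowConfig, forall_and, funext_iff, Pi.zero_apply,
    multiplicities_of_injective ha, and_assoc]

theorem card_touchingConfig {n : ℕ} {a : Fin (n + 1) → ℕ} (ha : Function.Injective a) :
    Nat.card {c // TouchingConfig n a c} =
      Nat.card (RelChain (fun u w : Fin (a (Fin.last n) + 1) → ℕ => ∃ h, IsRowConfig u w h) 0
        (multiplicities (a (Fin.last n)) a) (n + 1)) := by
  refine Nat.card_eq_of_bijective (fun c =>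
    have hc := (touchingConfig_iff ha _).1 c.2
    ⟨c.1.2, hc.2.1, hc.2.2, fun r => ⟨_, hc.1 r⟩⟩) ⟨fun c c' hcc' => ?_, fun v => ?_⟩
  · have hv : c.1.2 = c'.1.2 := congrArg Subtype.val hcc'
    have hc := ((touchingConfig_iff ha _).1 c.2).1
    have hc' := ((touchingConfig_iff ha _).1 c'.2).1
    refine Subtype.ext (Prod.ext (funext fun r => (hc r).unique ?_) hv)
    rw [hv]
    exact hc' r
  · choose h hh using v.2.2.2
    exact ⟨⟨(h, v.1), (touchingConfig_iff ha _).2 ⟨hh, v.2.1, v.2.2.1⟩⟩, rfl⟩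

theorem card_relChain_multiplicities (W : ℕ) :
    ∀ (k : ℕ) (a : Fin k → ℕ), Monotone a → (∀ i, a i ≤ W) →
      (Nat.card (RelChain (fun u w : Fin (W + 1) → ℕ => ∃ h, IsRowConfig u w h) 0
        (multiplicities W a) k) : ℚ) = vandermondeRatio a
  | 0, a, _, _ => by
    have : multiplicities W a = 0 := funext fun j => by simp [multiplicities]
    rw [this, Nat.card_unique]
    simp [vandermondeRatio]
  | k + 1, a, ha, haW => by
    rw [RelChain.card_succ finite_setOf_isRowConfig k _
        (fun u => (exists_isRowConfig_iff_mem_image_multiplicities ha haW u).symm),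
      Nat.cast_sum, sum_image fun b hb b' hb' => eq_of_multiplicities_eq
        (monotone_of_mem_interlacing ha hb) (monotone_of_mem_interlacing ha hb')
        (le_of_mem_interlacing haW hb) (le_of_mem_interlacing haW hb'),
      ← sum_vandermondeRatio_interlacing ha]
    exact sum_congr rfl fun b hb => card_relChain_multiplicities W k b
      (monotone_of_mem_interlacing ha hb) (le_of_mem_interlacing haW hb)

theorem touching_card_eq_vandermonde_ratio (n : ℕ) (a : Fin (n + 1) → ℕ)
    (hmono : StrictMono a) :
    (Nat.card {c // TouchingConfig n a c} : ℚ) =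
      (∏ p ∈ Finset.univ.filter (fun p : Fin (n + 1) × Fin (n + 1) => p.1 < p.2),
        (((a p.2 : ℚ) + (p.2 : ℕ)) - ((a p.1 : ℚ) + (p.1 : ℕ)))) /
      (∏ p ∈ Finset.univ.filter (fun p : Fin (n + 1) × Fin (n + 1) => p.1 < p.2),
        (((p.2 : ℕ) : ℚ) - ((p.1 : ℕ) : ℚ))) := by
  rw [card_touchingConfig hmono.injective,
    card_relChain_multiplicities _ _ a hmono.monotone fun i => hmono.monotone (Fin.le_last i)]
  rfl
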